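/- arXiv:2309.15855 — 2 statements merged into one kernel-verified Lean document; each statement's English description precedes it below -/
import Mathlib

section
/- Let L be the Laplacian of a finite simple connected weighted graph with positive weights, and L⁺ its Moore–Penrose pseudoinverse. Then the effective resistance R(v1,v2) := (e_{v1} − e_{v2})ᵀ L⁺ (e_{v1} − e_{v2}) is nonnegative, symmetric, and R(v1,v2) = 0 if and only if v1 = v2; i.e., R is a semi-metric on the vertex set V. -/
/-!
For nonnegative symmetric weights the Laplacian `L = D - W` has quadratic form
`½ ∑ w u v (x u - x v)²`, so it is positive semidefinite and, on a connected graph, its kernel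
consists of the constant vectors. By uniqueness, the Moore–Penrose inverse of a symmetric matrix
is symmetric, so `L⁺ = L⁺ᵀ L L⁺` is positive semidefinite: this gives `R ≥ 0`, and `R` is
symmetric because a quadratic form is even. If `R v₁ v₂ = 0`, then `L⁺ d = 0` for
`d = e v₁ - e v₂`, hence `L d = L (L L⁺) d = 0`, so `d` is constant and `v₁ = v₂`.
-/

open Matrix

namespace Matrix

variable {m n R : Type*} [Fintype m] [Fintype n] [CommRing R]

structure IsMoorePenroseInverse (A : Matrix m n R) (B : Matrix n m R) : Prop where
  mul_mul_left : A * B * A = A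
  mul_mul_right : B * A * B = B
  transpose_mul_left : (A * B)ᵀ = A * B
  transpose_mul_right : (B * A)ᵀ = B * A

namespace IsMoorePenroseInverse

variable {A : Matrix m n R} {B C : Matrix n m R}

theorem transpose (h : IsMoorePenroseInverse A B) : IsMoorePenroseInverse Aᵀ Bᵀ where
  mul_mul_left := by
    rw [← transpose_mul, ← transpose_mul, ← Matrix.mul_assoc, h.mul_mul_left]
  mul_mul_right := by
    rw [← transpose_mul, ← transpose_mul, ← Matrix.mul_assoc, h.mul_mul_right]
  transpose_mul_left := by rw [← transpose_mul, transpose_transpose, h.transpose_mul_right]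
  transpose_mul_right := by rw [← transpose_mul, transpose_transpose, h.transpose_mul_left]

theorem unique (hB : IsMoorePenroseInverse A B) (hC : IsMoorePenroseInverse A C) : B = C := by
  have hB' : B = B * A * C :=
    calc B = B * (A * B)ᵀ := by
          rw [hB.transpose_mul_left, ← Matrix.mul_assoc, hB.mul_mul_right]
      _ = B * Bᵀ * (A * C * A)ᵀ := by rw [hC.mul_mul_left, transpose_mul, Matrix.mul_assoc]
      _ = B * (A * B)ᵀ * (A * C)ᵀ := by simp only [transpose_mul, Matrix.mul_assoc]
      _ = B * A * C := by
        rw [hB.transpose_mul_left, hC.transpose_mul_left, ← Matrix.mul_assoc,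
          ← Matrix.mul_assoc, hB.mul_mul_right]
  have hC' : C = B * A * C :=
    calc C = (C * A)ᵀ * C := by rw [hC.transpose_mul_right, hC.mul_mul_right]
      _ = (A * B * A)ᵀ * Cᵀ * C := by rw [hB.mul_mul_left, transpose_mul]
      _ = (B * A)ᵀ * (C * A)ᵀ * C := by simp only [transpose_mul, Matrix.mul_assoc]
      _ = B * A * C := by
        rw [hB.transpose_mul_right, hC.transpose_mul_right, Matrix.mul_assoc, Matrix.mul_assoc,
          hC.mul_mul_right, Matrix.mul_assoc]
  exact hB'.trans hC'.symm

theorem isSymm {A B : Matrix n n R} (hA : A.IsSymm) (h : IsMoorePenroseInverse A B) : B.IsSymm :=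
  (hA.eq ▸ h.transpose).unique h

theorem transpose_mulVec_eq_zero (h : IsMoorePenroseInverse A B) {x : m → R} (hx : B *ᵥ x = 0) :
    Aᵀ *ᵥ x = 0 := by
  rw [← h.mul_mul_left, transpose_mul, transpose_mul, ← transpose_mul, h.transpose_mul_left,
    ← mulVec_mulVec, ← mulVec_mulVec, hx, mulVec_zero, mulVec_zero]

theorem posSemidef [PartialOrder R] [StarRing R] [TrivialStar R] {A B : Matrix n n R}
    (hA : A.PosSemidef) (h : IsMoorePenroseInverse A B) : B.PosSemidef := by
  have hBsymm : Bᴴ = B := by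
    rw [conjTranspose_eq_transpose_of_trivial]
    exact h.isSymm (by rw [IsSymm, ← conjTranspose_eq_transpose_of_trivial]; exact hA.1)
  have := hA.conjTranspose_mul_mul_same B
  rwa [hBsymm, h.mul_mul_right] at this

end IsMoorePenroseInverse

end Matrix

section WeightedLaplacian

variable {V R : Type*} [Fintype V] [DecidableEq V]

def weightedLaplacian [CommRing R] (w : V → V → R) : Matrix V V R :=
  diagonal (fun u => ∑ v, w u v) - of w

variable {w : V → V → R}

theorem weightedLaplacian_mulVec_apply [CommRing R] (x : V → R) (u : V) :
    (weightedLaplacian w *ᵥ x) u = ∑ v, w u v * (x u - x v) := by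
  simp only [weightedLaplacian, sub_mulVec, Pi.sub_apply, mulVec_diagonal, mul_sub,
    Finset.sum_sub_distrib, Finset.sum_mul]
  rfl

theorem isSymm_weightedLaplacian [CommRing R] (hw : ∀ u v, w u v = w v u) :
    (weightedLaplacian w).IsSymm := by
  ext u v
  by_cases h : u = v
  · subst h; rfl
  · simp [weightedLaplacian, diagonal, h, Ne.symm h, hw u v]

theorem two_mul_dotProduct_weightedLaplacian_mulVec [CommRing R] (hw : ∀ u v, w u v = w v u)
    (x : V → R) :
    2 * (x ⬝ᵥ weightedLaplacian w *ᵥ x) = ∑ u, ∑ v, w u v * (x u - x v) ^ 2 := by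
  have hswap :
      ∑ u, ∑ v, x v * (w u v * (x v - x u)) = ∑ u, ∑ v, x u * (w u v * (x u - x v)) := by
    rw [Finset.sum_comm]
    exact Finset.sum_congr rfl fun u _ => Finset.sum_congr rfl fun v _ => by rw [hw]
  calc 2 * (x ⬝ᵥ weightedLaplacian w *ᵥ x)
      = ∑ u, ∑ v, x u * (w u v * (x u - x v)) + ∑ u, ∑ v, x v * (w u v * (x v - x u)) := by
        simp only [hswap, ← two_mul, dotProduct, weightedLaplacian_mulVec_apply, Finset.mul_sum]
    _ = ∑ u, ∑ v, w u v * (x u - x v) ^ 2 := by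
        simp only [← Finset.sum_add_distrib]
        exact Finset.sum_congr rfl fun u _ => Finset.sum_congr rfl fun v _ => by ring

theorem posSemidef_weightedLaplacian [CommRing R] [LinearOrder R] [IsStrictOrderedRing R]
    [StarRing R] [TrivialStar R] (hw : ∀ u v, w u v = w v u) (hnn : ∀ u v, 0 ≤ w u v) :
    (weightedLaplacian w).PosSemidef := by
  refine .of_dotProduct_mulVec_nonneg ?_ fun x => ?_
  · rw [IsHermitian, conjTranspose_eq_transpose_of_trivial]
    exact isSymm_weightedLaplacian hw
  · rw [star_trivial, ← mul_nonneg_iff_of_pos_left (two_pos (α := R)),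
      two_mul_dotProduct_weightedLaplacian_mulVec hw]
    exact Finset.sum_nonneg fun u _ => Finset.sum_nonneg fun v _ =>
      mul_nonneg (hnn u v) (sq_nonneg _)

theorem eq_of_weightedLaplacian_mulVec_eq_zero_of_pos [CommRing R] [LinearOrder R]
    [IsStrictOrderedRing R]
    (hw : ∀ u v, w u v = w v u) (hnn : ∀ u v, 0 ≤ w u v) {x : V → R}
    (hx : weightedLaplacian w *ᵥ x = 0) {u v : V} (huv : 0 < w u v) : x u = x v := by
  have hterm_nonneg (a b : V) : 0 ≤ w a b * (x a - x b) ^ 2 := mul_nonneg (hnn a b) (sq_nonneg _)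
  have hsum := two_mul_dotProduct_weightedLaplacian_mulVec hw x
  rw [hx, dotProduct_zero, mul_zero, eq_comm,
    Finset.sum_eq_zero_iff_of_nonneg fun a _ => Finset.sum_nonneg fun b _ => hterm_nonneg a b]
    at hsum
  have hterm := (Finset.sum_eq_zero_iff_of_nonneg fun b _ => hterm_nonneg u b).1
    (hsum u (Finset.mem_univ u)) v (Finset.mem_univ v)
  simpa [huv.ne', sub_eq_zero] using hterm

theorem SimpleGraph.Reachable.eq_of_weightedLaplacian_mulVec_eq_zero [CommRing R] [LinearOrder R]
    [IsStrictOrderedRing R] {G : SimpleGraph V} (hG : ∀ u v, G.Adj u v → 0 < w u v)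
    (hw : ∀ u v, w u v = w v u) (hnn : ∀ u v, 0 ≤ w u v) {x : V → R}
    (hx : weightedLaplacian w *ᵥ x = 0) {u v : V} (h : G.Reachable u v) : x u = x v := by
  obtain ⟨p⟩ := h
  induction p with
  | nil => rfl
  | cons hadj _ ih =>
    exact (eq_of_weightedLaplacian_mulVec_eq_zero_of_pos hw hnn hx (hG _ _ hadj)).trans ih

end WeightedLaplacian

/-- The effective resistance
`R(v1,v2) = (e_{v1} − e_{v2})ᵀ L⁺ (e_{v1} − e_{v2})`, with `L⁺` the Moore–Penrose
pseudoinverse of the Laplacian of a finite simple connected weighted graph with positive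
weights, is nonnegative, symmetric, and vanishes exactly on the diagonal; i.e. it is a
semi-metric on `V`. -/
theorem effectiveResistance_semimetric {V : Type*} [Fintype V] [DecidableEq V]
    (w : V → V → ℝ) (hsym : ∀ u v, w u v = w v u) (hnn : ∀ u v, 0 ≤ w u v)
    (hdiag : ∀ v, w v v = 0)
    (G : SimpleGraph V) (hG : ∀ u v, G.Adj u v ↔ u ≠ v ∧ 0 < w u v)
    (hconn : G.Connected)
    (L : Matrix V V ℝ)
    (hL : ∀ u v, L u v = if u = v then ∑ k, w u k else -(w u v))
    (Lp : Matrix V V ℝ)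
    (hmp1 : L * Lp * L = L) (hmp2 : Lp * L * Lp = Lp)
    (hmp3 : (L * Lp)ᵀ = L * Lp) (hmp4 : (Lp * L)ᵀ = Lp * L)
    (R : V → V → ℝ)
    (hR : ∀ v1 v2, R v1 v2 =
      dotProduct (Pi.single v1 1 - Pi.single v2 1)
        (Lp.mulVec (Pi.single v1 1 - Pi.single v2 1))) :
    (∀ v1 v2, 0 ≤ R v1 v2) ∧ (∀ v1 v2, R v1 v2 = R v2 v1) ∧
      (∀ v1 v2, R v1 v2 = 0 ↔ v1 = v2) := by
  obtain rfl : L = weightedLaplacian w := by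
    ext u v
    by_cases h : u = v
    · subst h; simp [hL, weightedLaplacian, hdiag]
    · simp [hL, weightedLaplacian, h]
  have hMP : IsMoorePenroseInverse (weightedLaplacian w) Lp := ⟨hmp1, hmp2, hmp3, hmp4⟩
  have hLp := hMP.posSemidef (posSemidef_weightedLaplacian hsym hnn)
  refine ⟨fun v1 v2 => ?_, fun v1 v2 => ?_, fun v1 v2 => ⟨fun h => ?_, ?_⟩⟩
  · rw [hR]
    exact hLp.dotProduct_mulVec_nonneg _
  · rw [hR, hR, ← neg_sub, mulVec_neg, dotProduct_neg, neg_dotProduct, neg_neg]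
  · have hLpd := (hLp.dotProduct_mulVec_zero_iff _).1 ((hR v1 v2).symm.trans h)
    have hLd := hMP.transpose_mulVec_eq_zero hLpd
    rw [(isSymm_weightedLaplacian hsym).eq] at hLd
    by_contra hne
    have := (hconn.preconnected v1 v2).eq_of_weightedLaplacian_mulVec_eq_zero
      (fun u v huv => ((hG u v).1 huv).2) hsym hnn hLd
    norm_num [hne, Ne.symm hne] at this
  · rintro rfl
    simp [hR]
end

section
/- If ψ : [0,∞) → ℝ is completely monotone with ψ(0) < ∞ and γ : X × X → [0,∞) is a variogram (i.e., γ(x,y) = Var(Z(x)−Z(y)) for some second-order process Z), then (x,y) ↦ ψ(γ(x,y)) is a positive semidefinite kernel on X. -/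
open MeasureTheory ProbabilityTheory

/-- `ψ` is completely monotone on `[0,∞)`: continuous on `[0,∞)`, smooth on `(0,∞)`, with
`(−1)^i ψ^{(i)} ≥ 0` on `(0,∞)` for every `i`. -/
def CompletelyMonotone (ψ : ℝ → ℝ) : Prop :=
  ContinuousOn ψ (Set.Ici 0) ∧ ContDiffOn ℝ (⊤ : ℕ∞) ψ (Set.Ioi 0) ∧
    ∀ (i : ℕ) (x : ℝ), 0 < x → 0 ≤ (-1 : ℝ) ^ i * iteratedDeriv i ψ x

namespace CMVariogram

variable {ψ : ℝ → ℝ}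

noncomputable def F (ψ : ℝ → ℝ) (k : ℕ) (x : ℝ) : ℝ := (-1) ^ k * iteratedDeriv k ψ x

lemma F_zero (x : ℝ) : F ψ 0 x = ψ x := by simp [F]

lemma cm_diffAt (h2 : ContDiffOn ℝ (⊤ : ℕ∞) ψ (Set.Ioi 0)) (k : ℕ) {x : ℝ} (hx : 0 < x) :
    DifferentiableAt ℝ (iteratedDeriv k ψ) x := by
  have hs : IsOpen (Set.Ioi (0:ℝ)) := isOpen_Ioi
  have hEq : Set.EqOn (iteratedDerivWithin k ψ (Set.Ioi 0)) (iteratedDeriv k ψ) (Set.Ioi 0) := by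
    intro y hy
    rw [iteratedDerivWithin_eq_iteratedFDerivWithin, iteratedDeriv_eq_iteratedFDeriv,
      iteratedFDerivWithin_of_isOpen k hs hy]
  have hd : DifferentiableWithinAt ℝ (iteratedDerivWithin k ψ (Set.Ioi 0)) (Set.Ioi 0) x := by
    refine (h2.differentiableOn_iteratedDerivWithin ?_ hs.uniqueDiffOn) x hx
    exact_mod_cast WithTop.coe_lt_top _
  have hd' : DifferentiableWithinAt ℝ (iteratedDeriv k ψ) (Set.Ioi 0) x :=
    hd.congr (fun y hy => (hEq hy).symm) (hEq hx).symm
  exact hd'.differentiableAt (hs.mem_nhds hx)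

lemma cm_hasDeriv (h2 : ContDiffOn ℝ (⊤ : ℕ∞) ψ (Set.Ioi 0)) (k : ℕ) {x : ℝ} (hx : 0 < x) :
    HasDerivAt (F ψ k) (-(F ψ (k+1) x)) x := by
  have h := ((cm_diffAt h2 k hx).hasDerivAt).const_mul ((-1:ℝ) ^ k)
  have : (-1:ℝ) ^ k * deriv (iteratedDeriv k ψ) x = -(F ψ (k+1) x) := by
    rw [← iteratedDeriv_succ]; unfold F; ring
  rw [this] at h
  exact h

/-- Helper: if `f` has nonpositive derivative on `(0, s)`, then `f s ≤ f x` for `0 < x ≤ s`. -/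
lemma le_of_deriv_nonpos {f g : ℝ → ℝ} {x s : ℝ} (hx : 0 < x) (hxs : x ≤ s)
    (hf : ∀ t, 0 < t → t ≤ s → HasDerivAt f (g t) t)
    (hg : ∀ t, 0 < t → t < s → g t ≤ 0) : f s ≤ f x := by
  have hanti : AntitoneOn f (Set.Icc x s) := by
    apply antitoneOn_of_deriv_nonpos (convex_Icc x s)
    · intro t ht
      exact (hf t (lt_of_lt_of_le hx ht.1) ht.2).continuousAt.continuousWithinAt
    · intro t ht
      rw [interior_Icc] at ht
      exact ((hf t (lt_of_lt_of_le hx ht.1.le) ht.2.le).differentiableAt).differentiableWithinAt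
    · intro t ht
      rw [interior_Icc] at ht
      rw [(hf t (lt_of_lt_of_le hx ht.1.le) ht.2.le).deriv]
      exact hg t (lt_of_lt_of_le hx ht.1.le) ht.2
  exact hanti (Set.mem_Icc.2 ⟨le_refl x, hxs⟩) (Set.mem_Icc.2 ⟨hxs, le_refl s⟩) hxs

section CM

variable (hψ : CompletelyMonotone ψ)
include hψ

lemma cm_nonneg (k : ℕ) {x : ℝ} (hx : 0 < x) : 0 ≤ F ψ k x := hψ.2.2 k x hx

lemma cm_anti (k : ℕ) {x y : ℝ} (hx : 0 < x) (hxy : x ≤ y) : F ψ k y ≤ F ψ k x := by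
  refine le_of_deriv_nonpos hx hxy (fun t ht _ => cm_hasDeriv hψ.2.1 k ht) (fun t ht _ => ?_)
  simpa using cm_nonneg hψ (k+1) ht

/-- Single Taylor term bound: `F (m+k) s * (s-x)^k / k! ≤ F m x` for `0 < x ≤ s`. -/
lemma term_bound : ∀ (k m : ℕ) {x s : ℝ}, 0 < x → x ≤ s →
    F ψ (m + k) s * (s - x) ^ k / (Nat.factorial k) ≤ F ψ m x := by
  intro k
  induction k with
  | zero => intro m x s hx hxs; simpa using cm_anti hψ m hx hxs
  | succ k ih =>
    intro m x s hx hxs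
    have hs : (0:ℝ) < s := lt_of_lt_of_le hx hxs
    set φ : ℝ → ℝ := fun t => F ψ m t - F ψ (m + (k+1)) s * (s - t) ^ (k+1) / (Nat.factorial (k+1))
      with hφ
    have hder : ∀ t, 0 < t → t ≤ s → HasDerivAt φ
        (-(F ψ (m+1) t) + F ψ (m + (k+1)) s * (s - t) ^ k / (Nat.factorial k)) t := by
      intro t ht hts
      have h1 : HasDerivAt (fun t : ℝ => (s - t) ^ (k+1)) (-((k+1) * (s - t) ^ k)) t := by
        have hbase : HasDerivAt (fun t : ℝ => s - t) (-1) t := by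
          simpa using (hasDerivAt_id t).const_sub s
        have := hbase.fun_pow (k+1)
        simpa [mul_comm, mul_assoc, mul_left_comm] using this
      have h2 : HasDerivAt (fun t => F ψ (m + (k+1)) s * (s - t) ^ (k+1) / (Nat.factorial (k+1)))
          (-(F ψ (m + (k+1)) s * (s - t) ^ k / (Nat.factorial k))) t := by
        have := (h1.const_mul (F ψ (m + (k+1)) s)).div_const (Nat.factorial (k+1))
        refine this.congr_deriv ?_
        have hfac : ((Nat.factorial (k+1) : ℝ)) = (k+1) * Nat.factorial k := by
          rw [Nat.factorial_succ]; push_cast; ring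
        rw [hfac]
        have hk : ((k:ℝ)+1) ≠ 0 := by positivity
        have hfk : ((Nat.factorial k : ℝ)) ≠ 0 := by
          exact_mod_cast Nat.factorial_ne_zero k
        field_simp
      have := (cm_hasDeriv hψ.2.1 m ht).fun_sub h2
      simpa [hφ, sub_neg_eq_add] using this
    have hkey : φ s ≤ φ x := by
      refine le_of_deriv_nonpos hx hxs hder (fun t ht hts => ?_)
      have := ih (m+1) ht hts.le
      have hrw : m + 1 + k = m + (k+1) := by omega
      rw [hrw] at this
      linarith
    have hφs : φ s = F ψ m s := by simp [hφ]
    have h0 : 0 ≤ F ψ m s := cm_nonneg hψ m hs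
    have := hkey
    rw [hφs] at this
    have : 0 ≤ φ x := le_trans h0 this
    rw [hφ] at this
    simp only at this
    linarith

lemma psi_le_psi_zero {x : ℝ} (hx : 0 ≤ x) : ψ x ≤ ψ 0 := by
  rcases eq_or_lt_of_le hx with h | h
  · rw [← h]
  · have hcont : Filter.Tendsto ψ (nhdsWithin 0 (Set.Ioi 0)) (nhds (ψ 0)) :=
      (hψ.1 0 (Set.self_mem_Ici)).mono_left (nhdsWithin_mono _ Set.Ioi_subset_Ici_self)
    refine ge_of_tendsto hcont ?_
    filter_upwards [Ioc_mem_nhdsGT_of_mem (Set.mem_Ico.2 ⟨le_refl (0:ℝ), h⟩)] with y hy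
    have := cm_anti hψ 0 hy.1 hy.2
    simpa [F_zero] using this

lemma coeff_bound (k : ℕ) {s : ℝ} (hs : 0 < s) :
    F ψ k s * s ^ k / (Nat.factorial k) ≤ ψ 0 := by
  have hev : ∀ᶠ x in nhdsWithin (0:ℝ) (Set.Ioi 0),
      F ψ k s * (s - x) ^ k / (Nat.factorial k) ≤ ψ 0 := by
    filter_upwards [Ioc_mem_nhdsGT_of_mem (Set.mem_Ico.2 ⟨le_refl (0:ℝ), hs⟩)] with x hx
    have h1 := term_bound hψ k 0 hx.1 hx.2
    rw [zero_add, F_zero] at h1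
    exact le_trans h1 (psi_le_psi_zero hψ hx.1.le)
  have htend : Filter.Tendsto (fun x : ℝ => F ψ k s * (s - x) ^ k / (Nat.factorial k))
      (nhdsWithin 0 (Set.Ioi 0)) (nhds (F ψ k s * (s - 0) ^ k / (Nat.factorial k))) := by
    apply Filter.Tendsto.mono_left _ nhdsWithin_le_nhds
    exact (Continuous.tendsto (by continuity) 0)
  have := le_of_tendsto htend hev
  simpa using this


lemma cm_contOn (k : ℕ) {x s : ℝ} (hx : 0 < x) :
    ContinuousOn (F ψ k) (Set.Icc x s) := fun t ht =>
  ((cm_hasDeriv hψ.2.1 k (lt_of_lt_of_le hx ht.1)).continuousAt).continuousWithinAt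

lemma integrand_contOn (k m : ℕ) {x s : ℝ} (hx : 0 < x) :
    ContinuousOn (fun t => F ψ k t * (t - x) ^ m / (Nat.factorial m)) (Set.Icc x s) := by
  exact ((cm_contOn hψ k hx).mul (by fun_prop)).div_const _

lemma step_integral (K : ℕ) {x s : ℝ} (hx : 0 < x) (hxs : x < s) :
    (∫ t in x..s, F ψ (K+1) t * (t - x) ^ K / (Nat.factorial K))
      = F ψ (K+1) s * (s - x) ^ (K+1) / (Nat.factorial (K+1))
        + ∫ t in x..s, F ψ (K+2) t * (t - x) ^ (K+1) / (Nat.factorial (K+1)) := by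
  have huIcc : Set.uIcc x s = Set.Icc x s := Set.uIcc_of_le hxs.le
  have hderH : ∀ t ∈ Set.uIcc x s, HasDerivAt
      (fun t => F ψ (K+1) t * (t - x) ^ (K+1) / (Nat.factorial (K+1)))
      (F ψ (K+1) t * (t - x) ^ K / (Nat.factorial K)
        - F ψ (K+2) t * (t - x) ^ (K+1) / (Nat.factorial (K+1))) t := by
    intro t ht
    rw [huIcc] at ht
    have ht0 : 0 < t := lt_of_lt_of_le hx ht.1
    have hpow : HasDerivAt (fun t : ℝ => (t - x) ^ (K+1)) ((K+1) * (t - x) ^ K) t := by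
      have hbase : HasDerivAt (fun t : ℝ => t - x) 1 t := (hasDerivAt_id t).sub_const x
      simpa using hbase.fun_pow (K+1)
    have := ((cm_hasDeriv hψ.2.1 (K+1) ht0).mul hpow).div_const (Nat.factorial (K+1))
    refine this.congr_deriv ?_
    have hfac : ((Nat.factorial (K+1) : ℝ)) = (K+1) * Nat.factorial K := by
      rw [Nat.factorial_succ]; push_cast; ring
    have hfk : ((Nat.factorial K : ℝ)) ≠ 0 := by exact_mod_cast Nat.factorial_ne_zero K
    have hk : ((K:ℝ)+1) ≠ 0 := by positivity
    rw [hfac]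
    field_simp
    ring
  have hint : IntervalIntegrable
      (fun t => F ψ (K+1) t * (t - x) ^ K / (Nat.factorial K)
        - F ψ (K+2) t * (t - x) ^ (K+1) / (Nat.factorial (K+1))) MeasureTheory.volume x s := by
    apply ContinuousOn.intervalIntegrable
    rw [huIcc]
    exact (integrand_contOn hψ (K+1) K hx).sub (integrand_contOn hψ (K+2) (K+1) hx)
  have hFTC := intervalIntegral.integral_eq_sub_of_hasDerivAt hderH hint
  have i1 : IntervalIntegrable (fun t => F ψ (K+1) t * (t - x) ^ K / (Nat.factorial K))
      MeasureTheory.volume x s := by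
    apply ContinuousOn.intervalIntegrable; rw [huIcc]; exact integrand_contOn hψ (K+1) K hx
  have i2 : IntervalIntegrable (fun t => F ψ (K+2) t * (t - x) ^ (K+1) / (Nat.factorial (K+1)))
      MeasureTheory.volume x s := by
    apply ContinuousOn.intervalIntegrable; rw [huIcc]; exact integrand_contOn hψ (K+2) (K+1) hx
  have hsub := intervalIntegral.integral_sub i1 i2
  rw [hsub, sub_eq_iff_eq_add] at hFTC
  rw [hFTC]
  rw [show (x - x : ℝ) = 0 by ring]
  simp only [zero_pow (Nat.succ_ne_zero K), mul_zero, zero_div, mul_zero, sub_zero]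

lemma remainder_eq (K : ℕ) {x s : ℝ} (hx : 0 < x) (hxs : x < s) :
    ψ x = (∑ k ∈ Finset.range (K+1), F ψ k s * (s - x) ^ k / (Nat.factorial k))
      + ∫ t in x..s, F ψ (K+1) t * (t - x) ^ K / (Nat.factorial K) := by
  induction K with
  | zero =>
    have huIcc : Set.uIcc x s = Set.Icc x s := Set.uIcc_of_le hxs.le
    have hder : ∀ t ∈ Set.uIcc x s, HasDerivAt (F ψ 0) (-(F ψ 1 t)) t := by
      intro t ht; rw [huIcc] at ht
      exact cm_hasDeriv hψ.2.1 0 (lt_of_lt_of_le hx ht.1)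
    have hint : IntervalIntegrable (fun t => -(F ψ 1 t)) MeasureTheory.volume x s := by
      apply ContinuousOn.intervalIntegrable
      rw [huIcc]
      exact (cm_contOn hψ 1 hx).neg
    have hFTC := intervalIntegral.integral_eq_sub_of_hasDerivAt hder hint
    rw [intervalIntegral.integral_neg] at hFTC
    have h1 : (∫ t in x..s, F ψ (0+1) t * (t - x) ^ 0 / ((Nat.factorial 0 : ℕ) : ℝ))
        = ∫ t in x..s, F ψ 1 t := by norm_num
    have h2 : ∑ k ∈ Finset.range (0+1), F ψ k s * (s - x) ^ k / (Nat.factorial k) = ψ s := by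
      simp [F_zero]
    rw [h1, h2]
    rw [F_zero, F_zero] at hFTC
    linarith
  | succ K ih =>
    rw [ih, step_integral hψ K hx hxs, Finset.sum_range_succ _ (K+1)]
    simp only [show K+1+1 = K+2 from rfl]
    ring

lemma psi_zero_nonneg : 0 ≤ ψ 0 := by
  have h1 : (0:ℝ) ≤ F ψ 0 1 := cm_nonneg hψ 0 one_pos
  rw [F_zero] at h1
  exact le_trans h1 (psi_le_psi_zero hψ zero_le_one)

lemma remainder_le (K : ℕ) {x s : ℝ} (hx : 0 < x) (hxs : x < s) :
    (∫ t in x..s, F ψ (K+1) t * (t - x) ^ K / (Nat.factorial K))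
      ≤ ψ 0 * ((K:ℝ)+1) * ((s - x)/s) ^ K * Real.log (s/x) := by
  have hs : (0:ℝ) < s := lt_trans hx hxs
  have hψ0 : 0 ≤ ψ 0 := psi_zero_nonneg hψ
  have hpt : ∀ t ∈ Set.Icc x s, F ψ (K+1) t * (t - x) ^ K / (Nat.factorial K)
      ≤ (ψ 0 * ((K:ℝ)+1) * ((s - x)/s) ^ K) * (1/t) := by
    intro t ht
    have ht0 : 0 < t := lt_of_lt_of_le hx ht.1
    have htpow : (0:ℝ) < t ^ (K+1) := pow_pos ht0 _
    have hb : F ψ (K+1) t ≤ ψ 0 * (Nat.factorial (K+1)) / t ^ (K+1) := by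
      have h := coeff_bound hψ (K+1) ht0
      rw [div_le_iff₀ (by positivity : (0:ℝ) < ((Nat.factorial (K+1) : ℕ) : ℝ))] at h
      rw [le_div_iff₀ htpow]
      nlinarith [h]
    have htx : (0:ℝ) ≤ (t - x) ^ K := pow_nonneg (by linarith [ht.1]) K
    have hfacK : (0:ℝ) < ((Nat.factorial K : ℕ) : ℝ) := by positivity
    have step1 : F ψ (K+1) t * (t - x) ^ K / (Nat.factorial K)
        ≤ (ψ 0 * (Nat.factorial (K+1)) / t ^ (K+1)) * (t - x) ^ K / (Nat.factorial K) := by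
      apply div_le_div_of_nonneg_right (mul_le_mul_of_nonneg_right hb htx) hfacK.le
    have hratio : (t - x)/t ≤ (s - x)/s := by
      have h1 : x / s ≤ x / t := div_le_div_of_nonneg_left hx.le ht0 ht.2
      have h2 : (t - x)/t = 1 - x/t := by field_simp
      have h3 : (s - x)/s = 1 - x/s := by field_simp
      linarith
    have hratio0 : (0:ℝ) ≤ (t - x)/t := div_nonneg (by linarith [ht.1]) ht0.le
    have hratioK : ((t - x)/t) ^ K ≤ ((s - x)/s) ^ K := pow_le_pow_left₀ hratio0 hratio K
    have heq : (ψ 0 * (Nat.factorial (K+1)) / t ^ (K+1)) * (t - x) ^ K / (Nat.factorial K)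
        = (ψ 0 * ((K:ℝ)+1) * ((t - x)/t) ^ K) * (1/t) := by
      have hfac : ((Nat.factorial (K+1) : ℕ) : ℝ) = ((K:ℝ)+1) * ((Nat.factorial K : ℕ) : ℝ) := by
        rw [Nat.factorial_succ]; push_cast; ring
      rw [hfac, div_pow, pow_succ]
      field_simp
    rw [heq] at step1
    refine le_trans step1 ?_
    have h1t : (0:ℝ) ≤ 1/t := by positivity
    apply mul_le_mul_of_nonneg_right _ h1t
    apply mul_le_mul_of_nonneg_left hratioK (by positivity)
  have hint1 : IntervalIntegrable (fun t => F ψ (K+1) t * (t - x) ^ K / (Nat.factorial K))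
      MeasureTheory.volume x s := by
    apply ContinuousOn.intervalIntegrable
    rw [Set.uIcc_of_le hxs.le]
    exact integrand_contOn hψ (K+1) K hx
  have hint2 : IntervalIntegrable (fun t => (ψ 0 * ((K:ℝ)+1) * ((s - x)/s) ^ K) * (1/t))
      MeasureTheory.volume x s := by
    apply ContinuousOn.intervalIntegrable
    rw [Set.uIcc_of_le hxs.le]
    apply ContinuousOn.mul continuousOn_const
    apply ContinuousOn.div continuousOn_const continuousOn_id
    intro t ht
    exact ne_of_gt (lt_of_lt_of_le hx ht.1)
  have hmono := intervalIntegral.integral_mono_on hxs.le hint1 hint2 hpt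
  refine le_trans hmono ?_
  rw [intervalIntegral.integral_const_mul]
  have hlog : (∫ t in x..s, 1/t) = Real.log (s/x) := by
    apply integral_one_div
    rw [Set.uIcc_of_le hxs.le]
    intro h
    exact absurd h.1 (by linarith)
  rw [hlog]

lemma hasSum_series {x s : ℝ} (hx : 0 < x) (hxs : x < s) :
    HasSum (fun k => F ψ k s * (s - x) ^ k / (Nat.factorial k)) (ψ x) := by
  have hs : (0:ℝ) < s := lt_trans hx hxs
  set r : ℝ := (s - x)/s with hr
  have hr0 : 0 ≤ r := div_nonneg (by linarith) hs.le
  have hr1 : r < 1 := by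
    rw [hr, div_lt_one hs]; linarith
  have hterm_eq : ∀ k : ℕ, F ψ k s * (s - x) ^ k / (Nat.factorial k)
      = (F ψ k s * s ^ k / (Nat.factorial k)) * r ^ k := by
    intro k
    rw [hr, div_pow]
    have hsk : (s:ℝ) ^ k ≠ 0 := pow_ne_zero _ hs.ne'
    field_simp
  have hnonneg : ∀ k : ℕ, 0 ≤ F ψ k s * (s - x) ^ k / (Nat.factorial k) := by
    intro k
    have h1 := cm_nonneg hψ k hs
    have h2 : (0:ℝ) ≤ (s - x) ^ k := pow_nonneg (by linarith) k
    positivity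
  have hle : ∀ k : ℕ, F ψ k s * (s - x) ^ k / (Nat.factorial k) ≤ ψ 0 * r ^ k := by
    intro k
    rw [hterm_eq k]
    exact mul_le_mul_of_nonneg_right (coeff_bound hψ k hs) (pow_nonneg hr0 k)
  have hsummable : Summable (fun k => F ψ k s * (s - x) ^ k / (Nat.factorial k)) :=
    Summable.of_nonneg_of_le hnonneg hle ((summable_geometric_of_lt_one hr0 hr1).mul_left (ψ 0))
  have hRtend : Filter.Tendsto
      (fun K : ℕ => ∫ t in x..s, F ψ (K+1) t * (t - x) ^ K / (Nat.factorial K))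
      Filter.atTop (nhds 0) := by
    have hC : Filter.Tendsto
        (fun K : ℕ => ψ 0 * ((K:ℝ)+1) * r ^ K * Real.log (s/x)) Filter.atTop (nhds 0) := by
      have h1 : Filter.Tendsto (fun K : ℕ => (K:ℝ) * r ^ K) Filter.atTop (nhds 0) := by
        have hsum := summable_pow_mul_geometric_of_norm_lt_one 1
          (r := r) (by rwa [Real.norm_eq_abs, abs_of_nonneg hr0])
        refine hsum.tendsto_atTop_zero.congr ?_
        intro n; rw [pow_one]
      have h2 : Filter.Tendsto (fun K : ℕ => r ^ K) Filter.atTop (nhds 0) :=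
        tendsto_pow_atTop_nhds_zero_of_lt_one hr0 hr1
      have h3 := (h1.add h2).const_mul (ψ 0 * Real.log (s/x))
      rw [add_zero, mul_zero] at h3
      refine h3.congr ?_
      intro K; push_cast; ring
    refine squeeze_zero (fun K => ?_) (fun K => remainder_le hψ K hx hxs) hC
    apply intervalIntegral.integral_nonneg hxs.le
    intro t ht
    have ht0 : 0 < t := lt_of_lt_of_le hx ht.1
    have h1 := cm_nonneg hψ (K+1) ht0
    have h2 : (0:ℝ) ≤ (t - x) ^ K := pow_nonneg (by linarith [ht.1]) K
    positivity
  have hPtend : Filter.Tendsto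
      (fun K : ℕ => ∑ k ∈ Finset.range (K+1), F ψ k s * (s - x) ^ k / (Nat.factorial k))
      Filter.atTop (nhds (ψ x)) := by
    have heq : ∀ K : ℕ, ∑ k ∈ Finset.range (K+1), F ψ k s * (s - x) ^ k / (Nat.factorial k)
        = ψ x - ∫ t in x..s, F ψ (K+1) t * (t - x) ^ K / (Nat.factorial K) := by
      intro K
      have := remainder_eq hψ K hx hxs
      linarith
    rw [show (ψ x) = ψ x - 0 by ring]
    exact Filter.Tendsto.congr (fun K => (heq K).symm) (tendsto_const_nhds.sub hRtend)
  have hhs := hsummable.hasSum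
  have h4 : Filter.Tendsto
      (fun K : ℕ => ∑ k ∈ Finset.range (K+1), F ψ k s * (s - x) ^ k / (Nat.factorial k))
      Filter.atTop (nhds (∑' k, F ψ k s * (s - x) ^ k / (Nat.factorial k))) :=
    hhs.tendsto_sum_nat.comp (Filter.tendsto_add_atTop_nat 1)
  have huniq : (∑' k, F ψ k s * (s - x) ^ k / (Nat.factorial k)) = ψ x :=
    tendsto_nhds_unique h4 hPtend
  rwa [huniq] at hhs

lemma hasSum_exp {s t : ℝ} (hs : 0 < s) (ht : 0 < t) :
    HasSum (fun k : ℕ => (F ψ k s * s ^ k / (Nat.factorial k)) * Real.exp (-(k:ℝ) * t / s))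
      (ψ (s * (1 - Real.exp (-t / s)))) := by
  set x : ℝ := s * (1 - Real.exp (-t / s)) with hxdef
  have hexp1 : Real.exp (-t / s) < 1 := by
    apply Real.exp_lt_one_iff.2
    have hts : 0 < t / s := div_pos ht hs
    rw [neg_div]
    linarith
  have hexp0 : 0 < Real.exp (-t / s) := Real.exp_pos _
  have hx : 0 < x := by
    rw [hxdef]
    apply mul_pos hs
    linarith
  have hxs : x < s := by
    rw [hxdef]
    nlinarith
  have h := hasSum_series hψ hx hxs
  have heqf : (fun k : ℕ => F ψ k s * (s - x) ^ k / (Nat.factorial k))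
      = fun k : ℕ => (F ψ k s * s ^ k / (Nat.factorial k)) * Real.exp (-(k:ℝ) * t / s) := by
    funext k
    have hsx : s - x = s * Real.exp (-t/s) := by rw [hxdef]; ring
    rw [hsx, mul_pow, ← Real.exp_nat_mul]
    rw [show (k:ℝ) * (-t/s) = -(k:ℝ) * t / s by ring]
    ring
  rwa [heqf] at h

end CM

lemma tendsto_scale {t : ℝ} (ht : 0 < t) :
    Filter.Tendsto (fun s : ℝ => s * (1 - Real.exp (-t/s))) Filter.atTop (nhds t) := by
  have hslope : Filter.Tendsto (slope Real.exp 0) (nhdsWithin 0 {(0:ℝ)}ᶜ) (nhds 1) := by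
    have := hasDerivAt_iff_tendsto_slope.mp (Real.hasDerivAt_exp 0)
    rwa [Real.exp_zero] at this
  have harg : Filter.Tendsto (fun s : ℝ => -t/s) Filter.atTop (nhdsWithin 0 {(0:ℝ)}ᶜ) := by
    rw [tendsto_nhdsWithin_iff]
    constructor
    · exact tendsto_const_nhds.div_atTop Filter.tendsto_id
    · filter_upwards [Filter.eventually_gt_atTop 0] with s hs
      simp only [Set.mem_compl_iff, Set.mem_singleton_iff]
      exact div_ne_zero (neg_ne_zero.2 ht.ne') hs.ne'
  have hcomp := (hslope.comp harg).const_mul t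
  rw [mul_one] at hcomp
  refine hcomp.congr' ?_
  filter_upwards [Filter.eventually_gt_atTop 0] with s hs
  have ht' : t ≠ 0 := ht.ne'
  have hs' : s ≠ 0 := hs.ne'
  have hne : -t/s ≠ 0 := div_ne_zero (neg_ne_zero.2 ht') hs'
  rw [Function.comp_apply, slope_def_field, Real.exp_zero, sub_zero, mul_div_assoc',
    div_eq_iff hne]
  field_simp
  ring

lemma hasSum_finsetSum {ι : Type*} {s : Finset ι} {f : ι → ℕ → ℝ} {a : ι → ℝ}
    (h : ∀ i ∈ s, HasSum (f i) (a i)) :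
    HasSum (fun k => ∑ i ∈ s, f i k) (∑ i ∈ s, a i) := by
  classical
  induction s using Finset.induction_on with
  | empty => simpa using hasSum_zero
  | insert x s hnm ih =>
    simp only [Finset.sum_insert hnm]
    exact (h _ (Finset.mem_insert_self _ _)).add (ih fun i hi => h i (Finset.mem_insert_of_mem hi))

lemma schur_pow {n : ℕ} (c : Fin n → Fin n → ℝ) (hsym : ∀ i j, c i j = c j i)
    (hpsd : ∀ b : Fin n → ℝ, 0 ≤ ∑ i, ∑ j, b i * b j * c i j) (m : ℕ) (b : Fin n → ℝ) :
    0 ≤ ∑ i, ∑ j, b i * b j * (c i j) ^ m := by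
  classical
  set M : Matrix (Fin n) (Fin n) ℝ := Matrix.of c with hM
  have hMpsd : M.PosSemidef := by
    rw [Matrix.posSemidef_iff_dotProduct_mulVec]
    constructor
    · ext i j
      simp only [Matrix.conjTranspose_apply, hM, Matrix.of_apply, star_trivial]
      exact hsym j i
    · intro v
      have h0 := hpsd v
      have heq : dotProduct (star v) (M.mulVec v) = ∑ i, ∑ j, v i * v j * c i j := by
        simp only [dotProduct, Matrix.mulVec, Matrix.of_apply, hM, Pi.star_apply,
          star_trivial, dotProduct, Finset.mul_sum]
        exact Finset.sum_congr rfl fun i _ => Finset.sum_congr rfl fun j _ => by ring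
      rw [heq]
      exact h0
  obtain ⟨mm, B, hB⟩ := Matrix.posSemidef_iff_eq_sum_vecMulVec.mp hMpsd
  have hc : ∀ i j, c i j = ∑ r, B r i * B r j := by
    intro i j
    have h1 : M i j = (∑ r, Matrix.vecMulVec (B r) (star (B r))) i j := by rw [hB]
    simpa [hM, Matrix.sum_apply, Matrix.vecMulVec_apply] using h1
  induction m generalizing b with
  | zero =>
    have h1 : ∑ i, ∑ j, b i * b j * (c i j) ^ 0 = (∑ i, b i) * (∑ j, b j) := by
      rw [Finset.sum_mul_sum]
      simp
    rw [h1]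
    exact mul_self_nonneg _
  | succ m ih =>
    have h1 : ∑ i, ∑ j, b i * b j * (c i j) ^ (m+1)
        = ∑ r, ∑ i, ∑ j, (b i * B r i) * (b j * B r j) * (c i j) ^ m := by
      have h2 : ∀ i j : Fin n, b i * b j * (c i j) ^ (m+1)
          = ∑ r, (b i * B r i) * (b j * B r j) * (c i j) ^ m := by
        intro i j
        rw [pow_succ]
        nth_rewrite 2 [hc i j]
        rw [Finset.mul_sum, Finset.mul_sum]
        exact Finset.sum_congr rfl fun r _ => by ring
      calc ∑ i, ∑ j, b i * b j * (c i j) ^ (m+1)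
          = ∑ i, ∑ j, ∑ r, (b i * B r i) * (b j * B r j) * (c i j) ^ m :=
            Finset.sum_congr rfl fun i _ => Finset.sum_congr rfl fun j _ => h2 i j
        _ = ∑ i, ∑ r, ∑ j, (b i * B r i) * (b j * B r j) * (c i j) ^ m :=
            Finset.sum_congr rfl fun i _ => Finset.sum_comm
        _ = ∑ r, ∑ i, ∑ j, (b i * B r i) * (b j * B r j) * (c i j) ^ m := Finset.sum_comm
    rw [h1]
    exact Finset.sum_nonneg fun r _ => ih (fun i => b i * B r i)

lemma exp_quad {n : ℕ} (c : Fin n → Fin n → ℝ) (hsym : ∀ i j, c i j = c j i)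
    (hpsd : ∀ b : Fin n → ℝ, 0 ≤ ∑ i, ∑ j, b i * b j * c i j) {l : ℝ} (hl : 0 ≤ l)
    (b : Fin n → ℝ) :
    0 ≤ ∑ i, ∑ j, b i * b j * Real.exp (2 * l * c i j) := by
  have hexp : ∀ i j : Fin n, HasSum
      (fun m : ℕ => b i * b j * ((2*l*c i j) ^ m / (Nat.factorial m)))
      (b i * b j * Real.exp (2*l*c i j)) := by
    intro i j
    have h0 : HasSum (fun m : ℕ => (2*l*c i j) ^ m / (Nat.factorial m))
        (Real.exp (2*l*c i j)) := by
      have h1 := NormedSpace.expSeries_div_hasSum_exp (2*l*c i j)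
      rwa [← Real.exp_eq_exp_ℝ] at h1
    exact h0.mul_left _
  have hS : HasSum (fun m : ℕ => ∑ i, ∑ j, b i * b j * ((2*l*c i j) ^ m / (Nat.factorial m)))
      (∑ i, ∑ j, b i * b j * Real.exp (2*l*c i j)) :=
    hasSum_finsetSum fun i _ => hasSum_finsetSum fun j _ => hexp i j
  refine hS.nonneg fun m => ?_
  have h2 : ∑ i, ∑ j, b i * b j * ((2*l*c i j) ^ m / (Nat.factorial m))
      = ((2*l) ^ m / (Nat.factorial m)) * ∑ i, ∑ j, b i * b j * (c i j) ^ m := by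
    rw [Finset.mul_sum]
    refine Finset.sum_congr rfl fun i _ => ?_
    rw [Finset.mul_sum]
    refine Finset.sum_congr rfl fun j _ => ?_
    rw [mul_pow]
    ring
  rw [h2]
  have h3 : (0:ℝ) ≤ (2*l) ^ m / (Nat.factorial m) := by positivity
  exact mul_nonneg h3 (schur_pow c hsym hpsd m b)

end CMVariogram

/-- If `ψ` is completely monotone and `γ` is the variogram of a second-order
process `Z`, then `(x,y) ↦ ψ(γ(x,y))` is a positive semidefinite kernel on `X`. -/
theorem completelyMonotone_comp_variogram_posSemidef
    {X : Type*} [Nonempty X] {Ω : Type*} [MeasurableSpace Ω]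
    (μ : Measure Ω) [IsProbabilityMeasure μ]
    (Z : X → Ω → ℝ) (hZ : ∀ x, MemLp (Z x) 2 μ)
    (γ : X → X → ℝ)
    (hγ : ∀ x1 x2, γ x1 x2 = variance (fun ω => Z x1 ω - Z x2 ω) μ)
    (ψ : ℝ → ℝ) (hψ : CompletelyMonotone ψ) :
    ∀ (n : ℕ) (x : Fin n → X) (a : Fin n → ℝ),
      0 ≤ ∑ i, ∑ j, a i * a j * ψ (γ (x i) (x j)) := by
  intro n x a
  classical
  set m : Fin n → ℝ := fun i => ∫ ω, Z (x i) ω ∂μ with hm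
  set Y : Fin n → Ω → ℝ := fun i ω => Z (x i) ω - m i with hYdef
  have hYmem : ∀ i, MemLp (Y i) 2 μ := fun i => (hZ (x i)).sub (memLp_const (m i))
  have hYint : ∀ i j, Integrable (fun ω => Y i ω * Y j ω) μ := by
    intro i j
    have hre : (fun ω => Y i ω * Y j ω)
        = fun ω => ((Y i ω + Y j ω) ^ 2 - (Y i ω) ^ 2 - (Y j ω) ^ 2) / 2 := by
      funext ω; ring
    rw [hre]
    have h1 : MemLp (fun ω => Y i ω + Y j ω) 2 μ := (hYmem i).add (hYmem j)
    exact ((h1.integrable_sq.sub (hYmem i).integrable_sq).sub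
      (hYmem j).integrable_sq).div_const 2
  set c : Fin n → Fin n → ℝ := fun i j => ∫ ω, Y i ω * Y j ω ∂μ with hcdef
  have hcsym : ∀ i j, c i j = c j i := by
    intro i j
    simp only [hcdef]
    congr 1
    funext ω
    ring
  have hquad : ∀ b : Fin n → ℝ, 0 ≤ ∑ i, ∑ j, b i * b j * c i j := by
    intro b
    have hint2 : ∀ i j : Fin n, Integrable (fun ω => (b i * Y i ω) * (b j * Y j ω)) μ := by
      intro i j
      have h2 : (fun ω => (b i * Y i ω) * (b j * Y j ω))
          = fun ω => (b i * b j) * (Y i ω * Y j ω) := by funext ω; ring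
      rw [h2]
      exact (hYint i j).const_mul _
    have hterm : ∀ i j : Fin n, b i * b j * c i j
        = ∫ ω, (b i * Y i ω) * (b j * Y j ω) ∂μ := by
      intro i j
      rw [hcdef]
      rw [← integral_const_mul]
      congr 1
      funext ω
      ring
    have e1 : ∑ i, ∑ j, b i * b j * c i j = ∫ ω, (∑ i, b i * Y i ω) ^ 2 ∂μ := by
      calc ∑ i, ∑ j, b i * b j * c i j
          = ∑ i, ∑ j, ∫ ω, (b i * Y i ω) * (b j * Y j ω) ∂μ :=
            Finset.sum_congr rfl fun i _ => Finset.sum_congr rfl fun j _ => hterm i j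
        _ = ∑ i, ∫ ω, ∑ j, (b i * Y i ω) * (b j * Y j ω) ∂μ :=
            Finset.sum_congr rfl fun i _ =>
              (integral_finset_sum _ fun j _ => hint2 i j).symm
        _ = ∫ ω, ∑ i, ∑ j, (b i * Y i ω) * (b j * Y j ω) ∂μ :=
            (integral_finset_sum _ fun i _ =>
              integrable_finset_sum _ fun j _ => hint2 i j).symm
        _ = ∫ ω, (∑ i, b i * Y i ω) ^ 2 ∂μ := by
            congr 1
            funext ω
            rw [sq, Finset.sum_mul_sum]
    rw [e1]
    exact integral_nonneg fun ω => sq_nonneg _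
  have hγc : ∀ i j, γ (x i) (x j) = c i i + c j j - 2 * c i j := by
    intro i j
    rw [hγ (x i) (x j)]
    have hXmem : MemLp (fun ω => Z (x i) ω - Z (x j) ω) 2 μ := (hZ (x i)).sub (hZ (x j))
    have hZint : ∀ k, Integrable (Z (x k)) μ := fun k => (hZ (x k)).integrable one_le_two
    have hmean : ∫ ω, (Z (x i) ω - Z (x j) ω) ∂μ = m i - m j := by
      rw [integral_sub (hZint i) (hZint j)]
    rw [variance_eq_integral hXmem.aemeasurable]
    have hAint : Integrable (fun ω => Y i ω * Y i ω + Y j ω * Y j ω) μ :=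
      (hYint i i).add (hYint j j)
    have hBint : Integrable (fun ω => 2 * (Y i ω * Y j ω)) μ := (hYint i j).const_mul 2
    trans (∫ ω, (Y i ω * Y i ω + Y j ω * Y j ω - 2 * (Y i ω * Y j ω)) ∂μ)
    · refine integral_congr_ae (Filter.Eventually.of_forall fun ω => ?_)
      simp only [Pi.pow_apply, Pi.sub_apply]
      rw [hmean]
      simp only [hYdef]
      ring
    · rw [integral_sub hAint hBint, integral_add (hYint i i) (hYint j j), integral_const_mul]
  have hγnn : ∀ i j, 0 ≤ γ (x i) (x j) := by
    intro i j
    rw [hγ (x i) (x j)]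
    exact variance_nonneg _ _
  -- fixed shift e and scale s
  have step_s : ∀ (e : ℝ), 0 < e → ∀ (s : ℝ), 0 < s →
      0 ≤ ∑ i, ∑ j, a i * a j * ψ (s * (1 - Real.exp (-(γ (x i) (x j) + e) / s))) := by
    intro e he s hs
    have hg : ∀ i j, 0 < γ (x i) (x j) + e := fun i j => by linarith [hγnn i j]
    have hSS : HasSum
        (fun k : ℕ => ∑ i, ∑ j, a i * a j *
          ((CMVariogram.F ψ k s * s ^ k / (Nat.factorial k)) *
            Real.exp (-(k:ℝ) * (γ (x i) (x j) + e) / s)))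
        (∑ i, ∑ j, a i * a j * ψ (s * (1 - Real.exp (-(γ (x i) (x j) + e) / s)))) := by
      apply CMVariogram.hasSum_finsetSum
      intro i _
      apply CMVariogram.hasSum_finsetSum
      intro j _
      exact (CMVariogram.hasSum_exp hψ hs (hg i j)).mul_left _
    refine hSS.nonneg fun k => ?_
    set l : ℝ := (k:ℝ)/s with hl
    have hl0 : 0 ≤ l := by positivity
    have hterm : ∀ i j : Fin n, a i * a j * ((CMVariogram.F ψ k s * s ^ k / (Nat.factorial k)) *
          Real.exp (-(k:ℝ) * (γ (x i) (x j) + e) / s))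
        = (CMVariogram.F ψ k s * s ^ k / (Nat.factorial k)) *
          ((a i * Real.exp (-l * (c i i + e/2))) * (a j * Real.exp (-l * (c j j + e/2))) *
            Real.exp (2 * l * c i j)) := by
      intro i j
      have harg : -(k:ℝ) * (γ (x i) (x j) + e) / s
          = (-l * (c i i + e/2)) + (-l * (c j j + e/2)) + 2 * l * c i j := by
        rw [hγc i j, hl]
        field_simp
        ring
      rw [harg, Real.exp_add, Real.exp_add]
      ring
    have hsum_eq : (∑ i, ∑ j, a i * a j * ((CMVariogram.F ψ k s * s ^ k / (Nat.factorial k)) *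
          Real.exp (-(k:ℝ) * (γ (x i) (x j) + e) / s)))
        = (CMVariogram.F ψ k s * s ^ k / (Nat.factorial k)) *
          ∑ i, ∑ j, (fun i' => a i' * Real.exp (-l * (c i' i' + e/2))) i *
            (fun i' => a i' * Real.exp (-l * (c i' i' + e/2))) j *
              Real.exp (2 * l * c i j) := by
      rw [Finset.mul_sum]
      refine Finset.sum_congr rfl fun i _ => ?_
      rw [Finset.mul_sum]
      refine Finset.sum_congr rfl fun j _ => ?_
      rw [hterm i j]
    rw [hsum_eq]
    have hcoeff : 0 ≤ CMVariogram.F ψ k s * s ^ k / (Nat.factorial k) := by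
      have h1 := CMVariogram.cm_nonneg hψ k hs
      positivity
    exact mul_nonneg hcoeff (CMVariogram.exp_quad c hcsym hquad hl0 _)
  -- limit in s
  have step_e : ∀ (e : ℝ), 0 < e → 0 ≤ ∑ i, ∑ j, a i * a j * ψ (γ (x i) (x j) + e) := by
    intro e he
    have hg : ∀ i j, 0 < γ (x i) (x j) + e := fun i j => by linarith [hγnn i j]
    have htend : Filter.Tendsto (fun s : ℝ => ∑ i, ∑ j, a i * a j *
        ψ (s * (1 - Real.exp (-(γ (x i) (x j) + e) / s)))) Filter.atTop
        (nhds (∑ i, ∑ j, a i * a j * ψ (γ (x i) (x j) + e))) := by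
      apply tendsto_finset_sum
      intro i _
      apply tendsto_finset_sum
      intro j _
      have hψcont : ContinuousAt ψ (γ (x i) (x j) + e) :=
        (hψ.2.1.contDiffAt (isOpen_Ioi.mem_nhds (hg i j))).continuousAt
      exact (hψcont.tendsto.comp (CMVariogram.tendsto_scale (hg i j))).const_mul _
    refine ge_of_tendsto htend ?_
    filter_upwards [Filter.eventually_gt_atTop 0] with s hs
    exact step_s e he s hs
  -- limit in e
  have htend0 : Filter.Tendsto (fun e : ℝ => ∑ i, ∑ j, a i * a j * ψ (γ (x i) (x j) + e))
      (nhdsWithin 0 (Set.Ioi 0)) (nhds (∑ i, ∑ j, a i * a j * ψ (γ (x i) (x j)))) := by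
    apply tendsto_finset_sum
    intro i _
    apply tendsto_finset_sum
    intro j _
    have hψcont : Filter.Tendsto ψ (nhdsWithin (γ (x i) (x j)) (Set.Ici 0))
        (nhds (ψ (γ (x i) (x j)))) := hψ.1 _ (Set.mem_Ici.2 (hγnn i j))
    have harg : Filter.Tendsto (fun e : ℝ => γ (x i) (x j) + e) (nhdsWithin 0 (Set.Ioi 0))
        (nhdsWithin (γ (x i) (x j)) (Set.Ici 0)) := by
      rw [tendsto_nhdsWithin_iff]
      constructor
      · have h4 : Filter.Tendsto (fun e : ℝ => γ (x i) (x j) + e) (nhds 0)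
            (nhds (γ (x i) (x j) + 0)) := (continuous_const.add continuous_id).tendsto 0
        rw [add_zero] at h4
        exact h4.mono_left nhdsWithin_le_nhds
      · filter_upwards [self_mem_nhdsWithin] with e heIoi
        have he0 : (0:ℝ) < e := heIoi
        simp only [Set.mem_Ici]
        linarith [hγnn i j]
    exact (hψcont.comp harg).const_mul _
  refine ge_of_tendsto htend0 ?_
  filter_upwards [self_mem_nhdsWithin] with e he
  exact step_e e he
end
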